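/- arXiv:math/0303300 — 2 statements merged into one kernel-verified Lean document; each statement's English description precedes it below -/
import Mathlib

section
/- Let 𝕂 be a non-discrete Hausdorff topological field, E, F Hausdorff topological 𝕂-vector spaces, U ⊆ E open, and f : U → F of class C² in the BGN sense. Then for all v, w ∈ E and x ∈ U, the iterated directional derivatives satisfy ∂_v ∂_w f(x) = ∂_w ∂_v f(x). -/
/-!
For `t ≠ 0` near `0`, unfolding the defining identities of `f¹` and `f² = (f¹)¹` twice shows
`t² • f²((x,w,t),(v,0,0),t) = f(x+tv+tw) − f(x+tv) − f(x+tw) + f(x)`, and the right-hand side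
is symmetric in `v` and `w`. Cancelling `t²` makes the two continuous functions
`t ↦ f²((x,w,t),(v,0,0),t)` and `t ↦ f²((x,v,t),(w,0,0),t)` agree on `𝕂ˣ` near `0`; since
`𝕂ˣ` is dense and `F` is Hausdorff, they agree at `t = 0`.
-/

open Filter Topology

section Algebra

variable {𝕂 E F : Type*} [Ring 𝕂] [AddCommGroup E] [Module 𝕂 E] [AddCommGroup F] [Module 𝕂 F]

/-- The paper's `U⁽¹⁾`. -/
def bgnDomain (U : Set E) : Set (E × E × 𝕂) :=
  {p | p.1 ∈ U ∧ p.1 + p.2.2 • p.2.1 ∈ U}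

def IsDifferenceQuotientOn (U : Set E) (f : E → F) (f₁ : E × E × 𝕂 → F) : Prop :=
  ∀ p ∈ bgnDomain U, f (p.1 + p.2.2 • p.2.1) - f p.1 = p.2.2 • f₁ p

omit [Module 𝕂 F] in
theorem mem_bgnDomain_bgnDomain {U : Set E} {x v w : E} {t : 𝕂} (hx : x ∈ U)
    (hv : x + t • v ∈ U) (hw : x + t • w ∈ U) (hvw : x + t • v + t • w ∈ U) :
    ((x, w, t), (v, 0, 0), t) ∈ bgnDomain (bgnDomain U) := by
  simpa [bgnDomain] using ⟨⟨hx, hw⟩, hv, hvw⟩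

theorem smul_smul_eq_second_difference {U : Set E} {f : E → F} {f₁ : E × E × 𝕂 → F}
    {f₂ : (E × E × 𝕂) × (E × E × 𝕂) × 𝕂 → F} (hf₁ : IsDifferenceQuotientOn U f f₁)
    (hf₂ : IsDifferenceQuotientOn (bgnDomain U) f₁ f₂) {x v w : E} {t : 𝕂} (hx : x ∈ U)
    (hv : x + t • v ∈ U) (hw : x + t • w ∈ U) (hvw : x + t • v + t • w ∈ U) :
    t • t • f₂ ((x, w, t), (v, 0, 0), t) =
      f (x + t • v + t • w) - f (x + t • v) - f (x + t • w) + f x := by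
  have h₂ := hf₂ _ (mem_bgnDomain_bgnDomain hx hv hw hvw)
  simp only [Prod.smul_mk, Prod.mk_add_mk, smul_zero, add_zero, smul_eq_mul, mul_zero] at h₂
  rw [← h₂, smul_sub, ← hf₁ (x + t • v, w, t) ⟨hv, hvw⟩, ← hf₁ (x, w, t) ⟨hx, hw⟩]
  abel

end Algebra

section Topology

variable {𝕂 E F : Type*} [Ring 𝕂] [TopologicalSpace 𝕂] [AddCommGroup E] [Module 𝕂 E]
  [TopologicalSpace E] [ContinuousAdd E] [ContinuousSMul 𝕂 E]

theorem eventually_add_smul_mem {U : Set E} (hU : IsOpen U) {x : E} (hx : x ∈ U) (v w : E) :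
    ∀ᶠ t in 𝓝 (0 : 𝕂), x + t • v ∈ U ∧ x + t • w ∈ U ∧ x + t • v + t • w ∈ U := by
  have hU' : ∀ g : 𝕂 → E, Continuous g → g 0 = x → ∀ᶠ t in 𝓝 (0 : 𝕂), g t ∈ U :=
    fun g hg hg0 => hg.continuousAt.preimage_mem_nhds (hg0 ▸ hU.mem_nhds hx)
  exact (hU' _ (by fun_prop) (by simp)).and <|
    (hU' _ (by fun_prop) (by simp)).and (hU' _ (by fun_prop) (by simp))

theorem continuousAt_second_difference_quotient [TopologicalSpace F] {U : Set E} (hU : IsOpen U)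
    {f₂ : (E × E × 𝕂) × (E × E × 𝕂) × 𝕂 → F} (hf₂ : ContinuousOn f₂ (bgnDomain (bgnDomain U)))
    {x : E} (hx : x ∈ U) (v w : E) :
    ContinuousAt (fun t : 𝕂 => f₂ ((x, w, t), (v, 0, 0), t)) 0 := by
  have hmem : ∀ᶠ t in 𝓝 (0 : 𝕂), ((x, w, t), (v, 0, 0), t) ∈ bgnDomain (bgnDomain U) :=
    (eventually_add_smul_mem hU hx v w).mono fun t ⟨hv, hw, hvw⟩ =>
      mem_bgnDomain_bgnDomain hx hv hw hvw
  exact (hf₂ _ hmem.self_of_nhds).tendsto.comp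
    (tendsto_nhdsWithin_iff.2 ⟨(by fun_prop : Continuous _).tendsto 0, hmem⟩)

end Topology

theorem stmt_5_general (𝕂 : Type*) [Field 𝕂] [TopologicalSpace 𝕂]
    (hK : Dense {t : 𝕂 | t ≠ 0})
    (E F : Type*) [AddCommGroup E] [Module 𝕂 E] [TopologicalSpace E]
    [IsTopologicalAddGroup E] [ContinuousSMul 𝕂 E]
    [AddCommGroup F] [Module 𝕂 F] [TopologicalSpace F]
    [T2Space F]
    (U : Set E) (hU : IsOpen U) (f : E → F)
    (f1 : E × E × 𝕂 → F)
    (hf1 : ∀ p : E × E × 𝕂, p.1 ∈ U → p.1 + p.2.2 • p.2.1 ∈ U →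
      f (p.1 + p.2.2 • p.2.1) - f p.1 = p.2.2 • f1 p)
    (f2 : (E × E × 𝕂) × (E × E × 𝕂) × 𝕂 → F)
    (hf2cont : ContinuousOn f2
      {q : (E × E × 𝕂) × (E × E × 𝕂) × 𝕂 |
        (q.1.1 ∈ U ∧ q.1.1 + q.1.2.2 • q.1.2.1 ∈ U) ∧
        ((q.1 + q.2.2 • q.2.1).1 ∈ U ∧
          (q.1 + q.2.2 • q.2.1).1 + (q.1 + q.2.2 • q.2.1).2.2 • (q.1 + q.2.2 • q.2.1).2.1 ∈ U)})
    (hf2 : ∀ q : (E × E × 𝕂) × (E × E × 𝕂) × 𝕂,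
      (q.1.1 ∈ U ∧ q.1.1 + q.1.2.2 • q.1.2.1 ∈ U) →
      ((q.1 + q.2.2 • q.2.1).1 ∈ U ∧
        (q.1 + q.2.2 • q.2.1).1 + (q.1 + q.2.2 • q.2.1).2.2 • (q.1 + q.2.2 • q.2.1).2.1 ∈ U) →
      f1 (q.1 + q.2.2 • q.2.1) - f1 q.1 = q.2.2 • f2 q) :
    ∀ x ∈ U, ∀ v w : E,
      f2 ((x, w, 0), (v, 0, 0), 0) = f2 ((x, v, 0), (w, 0, 0), 0) := by
  intro x hx v w
  have hf₁ : IsDifferenceQuotientOn U f f1 := fun p hp => hf1 p hp.1 hp.2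
  have hf₂ : IsDifferenceQuotientOn (bgnDomain U) f1 f2 := fun q hq => hf2 q hq.1 hq.2
  have hsymm : ∀ᶠ t in 𝓝 (0 : 𝕂), t ≠ 0 →
      f2 ((x, w, t), (v, 0, 0), t) = f2 ((x, v, t), (w, 0, 0), t) := by
    filter_upwards [eventually_add_smul_mem hU hx v w] with t ⟨hv, hw, hvw⟩ ht
    have hwv : x + t • w + t • v ∈ U := by rwa [add_right_comm]
    refine smul_right_injective F ht (smul_right_injective F ht ?_)
    simp only [smul_smul_eq_second_difference hf₁ hf₂ hx hv hw hvw,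
      smul_smul_eq_second_difference hf₁ hf₂ hx hw hv hwv, add_right_comm x (t • w)]
    abel
  have hfreq : ∃ᶠ t in 𝓝 (0 : 𝕂), t ≠ 0 := mem_closure_iff_frequently.1 (hK 0)
  exact tendsto_nhds_unique_of_frequently_eq
    (continuousAt_second_difference_quotient hU hf2cont hx v w).tendsto
    (continuousAt_second_difference_quotient hU hf2cont hx w v).tendsto
    ((hfreq.and_eventually hsymm).mono fun t ⟨ht, h⟩ => h ht)

/-- Schwarz' lemma in BGN calculus: if `f : U → F` is of class C², i.e. it admits a
continuous difference-quotient map `f¹` on `U⁽¹⁾` which itself admits a continuous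
difference-quotient map `f² = (f¹)¹` on `(U⁽¹⁾)⁽¹⁾`, then the second-order directional
derivatives `∂_v ∂_w f(x) = f²((x,w,0),(v,0,0),0)` are symmetric in `v` and `w`. -/
theorem stmt_5 (𝕂 : Type*) [Field 𝕂] [TopologicalSpace 𝕂] [IsTopologicalRing 𝕂] [T2Space 𝕂]
    (hK : Dense {t : 𝕂 | t ≠ 0})
    (E F : Type*) [AddCommGroup E] [Module 𝕂 E] [TopologicalSpace E]
    [IsTopologicalAddGroup E] [ContinuousSMul 𝕂 E] [T2Space E]
    [AddCommGroup F] [Module 𝕂 F] [TopologicalSpace F]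
    [IsTopologicalAddGroup F] [ContinuousSMul 𝕂 F] [T2Space F]
    (U : Set E) (hU : IsOpen U) (f : E → F)
    (hf : ContinuousOn f U)
    (f1 : E × E × 𝕂 → F)
    (hf1cont : ContinuousOn f1 {p : E × E × 𝕂 | p.1 ∈ U ∧ p.1 + p.2.2 • p.2.1 ∈ U})
    (hf1 : ∀ p : E × E × 𝕂, p.1 ∈ U → p.1 + p.2.2 • p.2.1 ∈ U →
      f (p.1 + p.2.2 • p.2.1) - f p.1 = p.2.2 • f1 p)
    (f2 : (E × E × 𝕂) × (E × E × 𝕂) × 𝕂 → F)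
    (hf2cont : ContinuousOn f2
      {q : (E × E × 𝕂) × (E × E × 𝕂) × 𝕂 |
        (q.1.1 ∈ U ∧ q.1.1 + q.1.2.2 • q.1.2.1 ∈ U) ∧
        ((q.1 + q.2.2 • q.2.1).1 ∈ U ∧
          (q.1 + q.2.2 • q.2.1).1 + (q.1 + q.2.2 • q.2.1).2.2 • (q.1 + q.2.2 • q.2.1).2.1 ∈ U)})
    (hf2 : ∀ q : (E × E × 𝕂) × (E × E × 𝕂) × 𝕂,
      (q.1.1 ∈ U ∧ q.1.1 + q.1.2.2 • q.1.2.1 ∈ U) →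
      ((q.1 + q.2.2 • q.2.1).1 ∈ U ∧
        (q.1 + q.2.2 • q.2.1).1 + (q.1 + q.2.2 • q.2.1).2.2 • (q.1 + q.2.2 • q.2.1).2.1 ∈ U) →
      f1 (q.1 + q.2.2 • q.2.1) - f1 q.1 = q.2.2 • f2 q) :
    ∀ x ∈ U, ∀ v w : E,
      f2 ((x, w, 0), (v, 0, 0), 0) = f2 ((x, v, 0), (w, 0, 0), 0) :=
  stmt_5_general 𝕂 hK E F U hU f f1 hf1 f2 hf2cont hf2
end

section
/- Let 𝕂 be a non-discrete Hausdorff topological field, E and F Hausdorff topological 𝕂-vector spaces, U ⊆ E open, k ∈ ℕ∞ (ℕ₀ ∪ {∞}), and f : U → F of class C^k in the BGN sense. Let F₀ ⊆ F be a vector subspace containing the image of f. If F₀ is closed in F (or F₀ is sequentially closed and 𝕂 is metrizable), then the co-restriction f : U → F₀ is of class C^k as a map into the topological vector space F₀. -/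
universe u v

/-- BGN `C^n`-maps, defined recursively: `f : U → F` is `C⁰` if continuous on `U`, and
`C^{n+1}` if it is continuous and admits a difference-quotient map
`f¹ : U⁽¹⁾ → F` (satisfying `f(x+t•v) − f(x) = t • f¹(x,v,t)` on
`U⁽¹⁾ = {(x,v,t) : x ∈ U, x+t•v ∈ U}`) which is itself of class `C^n` on `U⁽¹⁾`. -/
def IsBGNC (𝕂 : Type u) [Field 𝕂] [TopologicalSpace 𝕂]
    (F : Type v) [AddCommGroup F] [Module 𝕂 F] [TopologicalSpace F] :
    (n : ℕ) → (E : Type u) → [AddCommGroup E] → [Module 𝕂 E] → [TopologicalSpace E] →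
      Set E → (E → F) → Prop
  | 0, _E, _, _, _, U, f => ContinuousOn f U
  | n + 1, E, _, _, _, U, f =>
      ContinuousOn f U ∧
      ∃ f1 : E × E × 𝕂 → F,
        (∀ p : E × E × 𝕂, p.1 ∈ U → p.1 + p.2.2 • p.2.1 ∈ U →
          f (p.1 + p.2.2 • p.2.1) - f p.1 = p.2.2 • f1 p) ∧
        IsBGNC 𝕂 F n (E × E × 𝕂)
          {p : E × E × 𝕂 | p.1 ∈ U ∧ p.1 + p.2.2 • p.2.1 ∈ U} f1

/-- BGN `C^k`-maps for `k ∈ ℕ₀ ∪ {∞}`: `f` is `C^k` iff it is `C^n` for all natural `n ≤ k`. -/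
def IsBGNCk (𝕂 : Type u) [Field 𝕂] [TopologicalSpace 𝕂]
    (F : Type v) [AddCommGroup F] [Module 𝕂 F] [TopologicalSpace F]
    (k : ℕ∞) (E : Type u) [AddCommGroup E] [Module 𝕂 E] [TopologicalSpace E]
    (U : Set E) (f : E → F) : Prop :=
  ∀ n : ℕ, (n : ℕ∞) ≤ k → IsBGNC 𝕂 F n E U f

/-!
It suffices that a difference quotient `f¹` of a map with values in `F₀` again takes its values
in `F₀` on `U⁽¹⁾`: the claim then follows by induction on `n`, applied to `f¹` on the open set
`U⁽¹⁾`. For `t ≠ 0`, `f¹(x,v,t) = t⁻¹ • (f(x+t•v) - f(x)) ∈ F₀`. Since `𝕂 \ {0}` is dense,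
every `f¹(x,v,t₀)` (in particular for `t₀ = 0`) is a limit of such values as `t → t₀`, `t ≠ 0`,
hence lies in `F₀` when `F₀` is closed, or sequentially closed and `𝕂` metrizable.
-/

open Filter Topology

theorem IsSeqClosed.mem_of_tendsto_of_eventually {X α : Type*} [TopologicalSpace X]
    {C : Set X} {l : Filter α} [l.NeBot] [l.IsCountablyGenerated] {u : α → X} {y : X}
    (hC : IsSeqClosed C) (hu : Tendsto u l (𝓝 y)) (hev : ∀ᶠ a in l, u a ∈ C) : y ∈ C := by
  obtain ⟨x, hx⟩ := exists_seq_tendsto l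
  obtain ⟨N, hN⟩ := eventually_atTop.mp (hx.eventually hev)
  exact hC (fun n => hN (n + N) (Nat.le_add_left N n))
    ((hu.comp hx).comp (tendsto_add_atTop_nat N))

theorem mem_of_tendsto_nhdsWithin_ne_zero {𝕂 X : Type*} [Zero 𝕂] [TopologicalSpace 𝕂]
    [TopologicalSpace X] (hK : Dense {t : 𝕂 | t ≠ 0}) {C : Set X}
    (hC : IsClosed C ∨ (IsSeqClosed C ∧ TopologicalSpace.MetrizableSpace 𝕂))
    {u : 𝕂 → X} {t₀ : 𝕂} {y : X} (hu : Tendsto u (𝓝[{t | t ≠ 0}] t₀) (𝓝 y))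
    (hev : ∀ᶠ t in 𝓝[{t | t ≠ 0}] t₀, u t ∈ C) : y ∈ C := by
  have : (𝓝[{t : 𝕂 | t ≠ 0}] t₀).NeBot :=
    mem_closure_iff_nhdsWithin_neBot.mp (hK.closure_eq ▸ Set.mem_univ t₀)
  rcases hC with hC | ⟨hC, _⟩
  · exact hC.mem_of_tendsto hu hev
  · exact hC.mem_of_tendsto_of_eventually hu hev

section DiffQuot

variable {𝕂 : Type u} [Field 𝕂] [TopologicalSpace 𝕂]
  {E : Type u} [AddCommGroup E] [Module 𝕂 E] [TopologicalSpace E]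
  {F : Type v} [AddCommGroup F] [Module 𝕂 F] [TopologicalSpace F]

variable (𝕂) in
def diffQuotDomain (U : Set E) : Set (E × E × 𝕂) :=
  {p | p.1 ∈ U ∧ p.1 + p.2.2 • p.2.1 ∈ U}

theorem IsOpen.diffQuotDomain [ContinuousAdd E] [ContinuousSMul 𝕂 E] {U : Set E}
    (hU : IsOpen U) : IsOpen (diffQuotDomain 𝕂 U) :=
  (hU.preimage continuous_fst).inter
    (hU.preimage (continuous_fst.add (continuous_snd.snd.smul continuous_snd.fst)))

theorem IsBGNC.continuousOn {n : ℕ} {U : Set E} {f : E → F} (h : IsBGNC 𝕂 F n E U f) :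
    ContinuousOn f U := by
  cases n with
  | zero => exact h
  | succ n => exact h.1

theorem diffQuot_mem_of_mem (hK : Dense {t : 𝕂 | t ≠ 0}) {F₀ : Submodule 𝕂 F}
    (hF₀ : IsClosed (F₀ : Set F) ∨
      (IsSeqClosed (F₀ : Set F) ∧ TopologicalSpace.MetrizableSpace 𝕂))
    [ContinuousAdd E] [ContinuousSMul 𝕂 E] {U : Set E} (hU : IsOpen U)
    {f : E → F} (hf : ∀ x ∈ U, f x ∈ F₀) {f1 : E × E × 𝕂 → F}
    (hdq : ∀ p : E × E × 𝕂, p.1 ∈ U → p.1 + p.2.2 • p.2.1 ∈ U →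
      f (p.1 + p.2.2 • p.2.1) - f p.1 = p.2.2 • f1 p)
    (hf1 : ContinuousOn f1 (diffQuotDomain 𝕂 U)) :
    ∀ q ∈ diffQuotDomain 𝕂 U, f1 q ∈ F₀ := by
  rintro ⟨x, v, t₀⟩ hq
  have hq_nhds := hU.diffQuotDomain.mem_nhds hq
  have hline : Continuous fun t : 𝕂 => (x, v, t) := by fun_prop
  have hcont : ContinuousAt (fun t : 𝕂 => f1 (x, v, t)) t₀ :=
    (hf1.continuousAt hq_nhds).comp (x := t₀) hline.continuousAt
  have hnear : ∀ᶠ t in 𝓝 t₀, (x, v, t) ∈ diffQuotDomain 𝕂 U :=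
    hline.continuousAt.preimage_mem_nhds hq_nhds
  refine mem_of_tendsto_nhdsWithin_ne_zero hK hF₀ (hcont.tendsto.mono_left nhdsWithin_le_nhds) ?_
  filter_upwards [nhdsWithin_le_nhds hnear, self_mem_nhdsWithin] with t ht (ht0 : t ≠ 0)
  show f1 (x, v, t) ∈ F₀
  rw [← F₀.smul_mem_iff ht0, ← hdq _ ht.1 ht.2]
  exact F₀.sub_mem (hf _ ht.2) (hf _ ht.1)

end DiffQuot

theorem Submodule.exists_coe_eqOn {R M α : Type*} [Semiring R] [AddCommMonoid M] [Module R M]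
    {N : Submodule R M} {s : Set α} {f : α → M} (hf : ∀ x ∈ s, f x ∈ N) :
    ∃ g : α → N, ∀ x ∈ s, (g x : M) = f x := by
  classical
  exact ⟨fun x => if h : x ∈ s then ⟨f x, hf x h⟩ else 0, fun x hx => by simp [hx]⟩

theorem ContinuousOn.of_coe_eqOn {α X : Type*} [TopologicalSpace α] [TopologicalSpace X]
    {C : Set X} {s : Set α} {f : α → X} {g : α → C} (hf : ContinuousOn f s)
    (hg : ∀ x ∈ s, (g x : X) = f x) : ContinuousOn g s :=
  Topology.IsInducing.subtypeVal.continuousOn_iff.mpr (hf.congr hg)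

theorem IsBGNC.codRestrict {𝕂 : Type u} [Field 𝕂] [TopologicalSpace 𝕂] [ContinuousAdd 𝕂]
    [ContinuousMul 𝕂] (hK : Dense {t : 𝕂 | t ≠ 0})
    {F : Type v} [AddCommGroup F] [Module 𝕂 F] [TopologicalSpace F] {F₀ : Submodule 𝕂 F}
    (hF₀ : IsClosed (F₀ : Set F) ∨
      (IsSeqClosed (F₀ : Set F) ∧ TopologicalSpace.MetrizableSpace 𝕂))
    {n : ℕ} {E : Type u} [AddCommGroup E] [Module 𝕂 E] [TopologicalSpace E]
    [ContinuousAdd E] [ContinuousSMul 𝕂 E] {U : Set E} (hU : IsOpen U) {f : E → F}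
    (himg : ∀ x ∈ U, f x ∈ F₀) (hf : IsBGNC 𝕂 F n E U f) {g : E → F₀}
    (hg : ∀ x ∈ U, (g x : F) = f x) : IsBGNC 𝕂 F₀ n E U g := by
  induction n generalizing E with
  | zero => exact ContinuousOn.of_coe_eqOn hf hg
  | succ n ih =>
    obtain ⟨hc, f1, hdq, hf1⟩ := hf
    have hmem1 := diffQuot_mem_of_mem hK hF₀ hU himg hdq hf1.continuousOn
    obtain ⟨g1, hg1⟩ := Submodule.exists_coe_eqOn hmem1
    refine ⟨hc.of_coe_eqOn hg, g1, fun p h1 h2 => ?_, ih hU.diffQuotDomain hmem1 hf1 hg1⟩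
    ext
    rw [Submodule.coe_sub, Submodule.coe_smul, hg _ h1, hg _ h2, hg1 p ⟨h1, h2⟩]
    exact hdq p h1 h2

theorem stmt_12_general (𝕂 : Type u) [Field 𝕂] [TopologicalSpace 𝕂] [IsTopologicalRing 𝕂]
    (hK : Dense {t : 𝕂 | t ≠ 0})
    (E : Type u) (F : Type v) [AddCommGroup E] [Module 𝕂 E] [TopologicalSpace E]
    [IsTopologicalAddGroup E] [ContinuousSMul 𝕂 E]
    [AddCommGroup F] [Module 𝕂 F] [TopologicalSpace F]
    (U : Set E) (hU : IsOpen U) (k : ℕ∞) (f : E → F)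
    (F₀ : Submodule 𝕂 F)
    (hF₀ : IsClosed (F₀ : Set F) ∨
      (IsSeqClosed (F₀ : Set F) ∧ TopologicalSpace.MetrizableSpace 𝕂))
    (himg : ∀ x ∈ U, f x ∈ F₀)
    (hf : IsBGNCk 𝕂 F k E U f) :
    ∀ g : E → F₀, (∀ x ∈ U, (g x : F) = f x) → IsBGNCk 𝕂 F₀ k E U g :=
  fun _ hg n hn => (hf n hn).codRestrict hK hF₀ hU himg hg

/-- Lemma 10.1 of Bertram–Glöckner–Neeb: if `f : U → F` is `C^k` in the BGN sense and its
image is contained in a vector subspace `F₀` which is closed (or sequentially closed with `𝕂`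
metrizable), then the co-restriction `U → F₀` is `C^k` as a map into `F₀`. -/
theorem stmt_12 (𝕂 : Type u) [Field 𝕂] [TopologicalSpace 𝕂] [IsTopologicalRing 𝕂] [T2Space 𝕂]
    (hK : Dense {t : 𝕂 | t ≠ 0})
    (E : Type u) (F : Type v) [AddCommGroup E] [Module 𝕂 E] [TopologicalSpace E]
    [IsTopologicalAddGroup E] [ContinuousSMul 𝕂 E] [T2Space E]
    [AddCommGroup F] [Module 𝕂 F] [TopologicalSpace F]
    [IsTopologicalAddGroup F] [ContinuousSMul 𝕂 F] [T2Space F]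
    (U : Set E) (hU : IsOpen U) (k : ℕ∞) (f : E → F)
    (F₀ : Submodule 𝕂 F)
    (hF₀ : IsClosed (F₀ : Set F) ∨
      (IsSeqClosed (F₀ : Set F) ∧ TopologicalSpace.MetrizableSpace 𝕂))
    (himg : ∀ x ∈ U, f x ∈ F₀)
    (hf : IsBGNCk 𝕂 F k E U f) :
    ∀ g : E → F₀, (∀ x ∈ U, (g x : F) = f x) → IsBGNCk 𝕂 F₀ k E U g :=
  stmt_12_general 𝕂 hK E F U hU k f F₀ hF₀ himg hf
end
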